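/- The set of actual causes may strictly shrink when an exogenous tuple is added: there exist a type α of tuples, a Boolean monotone query Q, a finite set Dⁿ of endogenous tuples, and a tuple t ∉ Dⁿ such that CS(Dⁿ, {t}, Q) is a strict subset of CS(Dⁿ, ∅, Q). -/
import Mathlib


/-- `t` is an actual cause for the boolean query `Q` in the instance with
endogenous tuples `Dn` and exogenous tuples `Dx`. -/
def IsCause {α : Type*} [DecidableEq α] (Q : Finset α → Prop) (Dn Dx : Finset α) (t : α) :
    Prop :=
  t ∈ Dn ∧ ∃ Γ ⊆ Dn, t ∉ Γ ∧ Q ((Dn ∪ Dx) \ Γ) ∧ ¬ Q ((Dn ∪ Dx) \ insert t Γ)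

/-- the set of actual causes may strictly shrink when an exogenous
tuple is added. -/
theorem causes_may_shrink_with_exogenous :
    ∃ (α : Type) (_ : DecidableEq α) (Q : Finset α → Prop) (Dn : Finset α) (t : α),
      (∀ X Y : Finset α, X ⊆ Y → Q X → Q Y) ∧ t ∉ Dn ∧
      {s | IsCause Q Dn {t} s} ⊂ {s | IsCause Q Dn ∅ s} := by
  refine ⟨ℕ, inferInstance, fun X => X.Nonempty, {0}, 1, ?_, by decide, ?_⟩
  · exact fun X Y h hX => hX.mono h
  constructor
  · -- {s | IsCause _ {0} {1} s} is empty, so ⊆ anything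
    intro s hs
    exfalso
    obtain ⟨hmem, Γ, hΓ, hnot, hQ, hnQ⟩ := hs
    apply hnQ
    refine ⟨1, Finset.mem_sdiff.mpr ⟨by decide, ?_⟩⟩
    intro h1
    rcases Finset.mem_insert.mp h1 with h | h
    · simp only [Finset.mem_singleton] at hmem; omega
    · exact absurd (hΓ h) (by decide)
  · -- 0 is a cause with Dx = ∅ but not with Dx = {1}
    intro hsub
    have h0 : (0 : ℕ) ∈ {s | IsCause (fun X => X.Nonempty) {0} ∅ s} := by
      refine ⟨by decide, ∅, by decide, by decide, ?_, ?_⟩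
      · exact ⟨0, by decide⟩
      · intro ⟨x, hx⟩
        simp at hx
    have := hsub h0
    obtain ⟨hmem, Γ, hΓ, hnot, hQ, hnQ⟩ := this
    apply hnQ
    refine ⟨1, Finset.mem_sdiff.mpr ⟨by decide, ?_⟩⟩
    intro h1
    rcases Finset.mem_insert.mp h1 with h | h
    · omega
    · exact absurd (hΓ h) (by decide)
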